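/- Let Φ be a real (L+1)×T matrix such that Φ·Φᵀ is invertible, let Y_f be a real q×T matrix, let Θ* := Y_f·Φᵀ·(Φ·Φᵀ)⁻¹ and let E := Y_f − Θ*·Φ. Fix a vector b ∈ ℝ^{L+1}. Then every g ∈ ℝ^T with Φ·g = b satisfies Y_f·g = Θ*·b if and only if E·ĝ = 0 for every ĝ ∈ ℝ^T with Φ·ĝ = 0. -/

import Mathlib

/-!
The map `Φᵀ (Φ Φᵀ)⁻¹` is a right inverse of `Φ` and `Θ* = Y_f Φᵀ (Φ Φᵀ)⁻¹`, so
`g₀ := Φᵀ (Φ Φᵀ)⁻¹ b` solves `Φ g₀ = b` with `Y_f g₀ = Θ* b`. Every other solution differs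
from `g₀` by some `ĝ ∈ ker Φ`, so the DeePC prediction always agrees with `Θ* b` exactly when
`Y_f` vanishes on `ker Φ`; and on `ker Φ` the residual matrix `E = Y_f - Θ* Φ` acts as `Y_f`.
-/

open Matrix

namespace Matrix

variable {m n p R : Type*} [Fintype n] [Ring R]

theorem forall_mulVec_eq_imp_iff_of_mulVec_eq {A : Matrix m n R} {B : Matrix p n R}
    {b : m → R} {c : p → R} {g₀ : n → R} (hA : A *ᵥ g₀ = b) (hB : B *ᵥ g₀ = c) :
    (∀ g, A *ᵥ g = b → B *ᵥ g = c) ↔ ∀ g, A *ᵥ g = 0 → B *ᵥ g = 0 := by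
  constructor
  · intro h g hg
    have hsum := h (g₀ + g) (by rw [mulVec_add, hA, hg, add_zero])
    rwa [mulVec_add, hB, add_eq_left] at hsum
  · intro h g hg
    have hdiff := h (g - g₀) (by rw [mulVec_sub, hg, hA, sub_self])
    rwa [mulVec_sub, hB, sub_eq_zero] at hdiff

theorem sub_mul_mulVec_of_mulVec_eq_zero [Fintype m] {A : Matrix m n R} {g : n → R} (hg : A *ᵥ g = 0)
    (B : Matrix p n R) (C : Matrix p m R) : (B - C * A) *ᵥ g = B *ᵥ g := by
  rw [sub_mulVec, ← mulVec_mulVec, hg, mulVec_zero, sub_zero]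

theorem forall_mulVec_eq_imp_iff_of_mul_eq_one [Fintype m] [DecidableEq m] {A : Matrix m n R}
    {A' : Matrix n m R} (hA : A * A' = 1) (B : Matrix p n R) (b : m → R) :
    (∀ g, A *ᵥ g = b → B *ᵥ g = (B * A') *ᵥ b) ↔
      ∀ g, A *ᵥ g = 0 → (B - B * A' * A) *ᵥ g = 0 := by
  rw [forall_mulVec_eq_imp_iff_of_mulVec_eq (g₀ := A' *ᵥ b)
    (by rw [mulVec_mulVec, hA, one_mulVec]) (mulVec_mulVec _ _ _)]
  refine forall₂_congr fun g hg => ?_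
  rw [sub_mul_mulVec_of_mulVec_eq_zero hg]

theorem mul_transpose_mul_nonsing_inv {K : Type*} [CommRing K] [Fintype m] [DecidableEq m]
    {Φ : Matrix m n K} (hΦ : IsUnit (Φ * Φᵀ)) : Φ * (Φᵀ * (Φ * Φᵀ)⁻¹) = 1 := by
  rw [← Matrix.mul_assoc]
  exact mul_nonsing_inv _ ((isUnit_iff_isUnit_det _).mp hΦ)

end Matrix

/-- Pointwise (fixed b) version of the equivalence between the φ-DeePC
behavioral predictor and the φ-SPC identified predictor. -/
theorem pointwise_deepc_spc_equivalence
    {L T q : ℕ}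
    (Φ : Matrix (Fin (L + 1)) (Fin T) ℝ)
    (Yf : Matrix (Fin q) (Fin T) ℝ)
    (hΦ : IsUnit (Φ * Φᵀ))
    (Θstar : Matrix (Fin q) (Fin (L + 1)) ℝ)
    (hΘ : Θstar = Yf * Φᵀ * (Φ * Φᵀ)⁻¹)
    (E : Matrix (Fin q) (Fin T) ℝ)
    (hE : E = Yf - Θstar * Φ)
    (b : Fin (L + 1) → ℝ) :
    (∀ g : Fin T → ℝ, Φ *ᵥ g = b → Yf *ᵥ g = Θstar *ᵥ b) ↔
      (∀ ghat : Fin T → ℝ, Φ *ᵥ ghat = 0 → E *ᵥ ghat = 0) := by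
  subst hΘ hE
  rw [Matrix.mul_assoc Yf]
  exact forall_mulVec_eq_imp_iff_of_mul_eq_one (mul_transpose_mul_nonsing_inv hΦ) Yf b
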